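/- Assume ‖x_t‖ ≤ 1 for all t = 1,…,T, b > 1, c > 0 with 1/b + 1/c < 1, and let a_t = 1/(1 − x_tᵀ A_{t−1}^{−1} x_t) and ã_t = 1/(1 − x_tᵀ A_{t−1}^{−1} x_t − c^{−1}‖x_t‖²). Then for every T-tuple (u_1,…,u_T) ∈ (ℝ^d)^T: Σ_{t=1}^T ã_t (y_t − u_tᵀx_t)² ≤ Σ_{t=1}^T (y_t − u_tᵀx_t)² + (b/(b−1)) · S · ln det((1/b)·A_T) + T·S / ( c(1 − b^{−1})² − (1 − b^{−1}) ), where S = sup_{1 ≤ t ≤ T} (y_t − u_tᵀx_t)². -/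

import Mathlib

open Matrix Finset

/-!
Write `r_t = x_tᵀ A_{t-1}⁻¹ x_t`. Inductively `A_t` is positive definite with `A_t ⪰ b • 1`, so
`0 ≤ r_t ≤ ‖x_t‖² / b ≤ 1 / b`, and since `a_t = 1 / (1 - r_t)` the matrix determinant lemma
gives `det A_t = a_t det A_{t-1}`, i.e. `ln det (A_T / b) = ∑ ln a_t`. Per step,
`a_t - 1 ≤ a_t ln a_t ≤ (b / (b - 1)) ln a_t` because `1 ≤ a_t ≤ b / (b - 1)`, while `ã_t - a_t`
is increasing in `r_t` and `‖x_t‖²`, hence at most its value `1 / (c(1 - b⁻¹)² - (1 - b⁻¹))` at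
`r_t = 1 / b`, `‖x_t‖ = 1`. Multiply `ã_t - 1 ≥ 0` by `(y_t - u_tᵀ x_t)² ≤ S` and sum.
-/

theorem sub_one_le_mul_log {a B : ℝ} (ha : 1 ≤ a) (haB : a ≤ B) : a - 1 ≤ B * Real.log a := by
  have hlog : 1 - a⁻¹ ≤ Real.log a := Real.one_sub_inv_le_log_of_pos (by linarith)
  calc a - 1 = a * (1 - a⁻¹) := by field_simp
    _ ≤ a * Real.log a := by gcongr
    _ ≤ B * Real.log a := by gcongr; exact Real.log_nonneg ha

theorem one_div_one_sub_sub_le {r q β γ : ℝ} (hr : r ≤ β) (hq0 : 0 ≤ q) (hq : q ≤ γ)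
    (hβγ : β + γ < 1) :
    1 / (1 - r - q) ≤ 1 / (1 - r) + γ / ((1 - β - γ) * (1 - β)) := by
  have hβ : 0 < 1 - β := by linarith
  have hβγ' : 0 < 1 - β - γ := by linarith
  have hsplit : 1 / (1 - r - q) - 1 / (1 - r) = q / ((1 - r - q) * (1 - r)) := by
    rw [div_sub_div _ _ (by linarith) (by linarith)]
    ring
  have hmono : q / ((1 - r - q) * (1 - r)) ≤ γ / ((1 - β - γ) * (1 - β)) := by
    gcongr <;> linarith
  linarith

section Matrix

variable {n : Type*} [Fintype n] [DecidableEq n]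

theorem mul_dotProduct_inv_mulVec_le {M : Matrix n n ℝ} {b : ℝ} (hb : 0 < b) (hM : M.PosDef)
    (hMb : (M - b • 1).PosSemidef) (x : n → ℝ) : b * (x ⬝ᵥ M⁻¹ *ᵥ x) ≤ x ⬝ᵥ x := by
  set y := M⁻¹ *ᵥ x
  have hMy : M *ᵥ y = x := by
    rw [mulVec_mulVec, mul_nonsing_inv _ (isUnit_iff_ne_zero.2 hM.det_pos.ne'), one_mulVec]
  have hy : b * (y ⬝ᵥ y) ≤ x ⬝ᵥ y := by
    have := hMb.dotProduct_mulVec_nonneg y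
    simp only [sub_mulVec, smul_mulVec, one_mulVec, dotProduct_sub, dotProduct_smul,
      smul_eq_mul, star_trivial, hMy] at this
    rw [dotProduct_comm] at this
    linarith
  have hcs : (x ⬝ᵥ y) ^ 2 ≤ (x ⬝ᵥ x) * (y ⬝ᵥ y) := by
    simpa [dotProduct, sq] using sum_mul_sq_le_sq_mul_sq univ x y
  have hxx : 0 ≤ x ⬝ᵥ x := by simpa using dotProduct_star_self_nonneg x
  have hxy : 0 ≤ x ⬝ᵥ y := by simpa using hM.inv.posSemidef.dotProduct_mulVec_nonneg x
  rcases hxy.eq_or_lt with h | h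
  · rwa [← h, mul_zero]
  · refine le_of_mul_le_mul_left ?_ h
    nlinarith [mul_le_mul_of_nonneg_left hy hxx]

theorem det_add_smul_vecMulVec {M : Matrix n n ℝ} (hM : IsUnit M.det) (a : ℝ) (u v : n → ℝ) :
    (M + a • vecMulVec u v).det = M.det * (1 + a * (v ⬝ᵥ M⁻¹ *ᵥ u)) := by
  rw [vecMulVec_eq Unit, ← smul_mul, ← replicateCol_smul,
    det_add_replicateCol_mul_replicateRow hM, Matrix.mul_assoc, ← replicateCol_mulVec]
  simp [replicateRow_mul_replicateCol_apply, mulVec_smul]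

theorem dotProduct_inv_mulVec_mem_Icc {M : Matrix n n ℝ} {b : ℝ} (hb : 0 < b) (hM : M.PosDef)
    (hMb : (M - b • 1).PosSemidef) {x : n → ℝ} (hx : x ⬝ᵥ x ≤ 1) :
    x ⬝ᵥ M⁻¹ *ᵥ x ∈ Set.Icc 0 b⁻¹ := by
  refine ⟨by simpa using hM.inv.posSemidef.dotProduct_mulVec_nonneg x, ?_⟩
  rw [← one_div b, le_div_iff₀' hb]
  exact (mul_dotProduct_inv_mulVec_le hb hM hMb x).trans hx

theorem posDef_det_add_smul_vecMulVec {M : Matrix n n ℝ} {b : ℝ} (hb : 1 < b) (hM : M.PosDef)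
    (hMb : (M - b • 1).PosSemidef) {x : n → ℝ} (hx : x ⬝ᵥ x ≤ 1) {a : ℝ}
    (ha : a = 1 / (1 - x ⬝ᵥ M⁻¹ *ᵥ x)) :
    (M + a • vecMulVec x x).PosDef ∧ (M + a • vecMulVec x x - b • 1).PosSemidef ∧
      (M + a • vecMulVec x x).det = M.det * a := by
  obtain ⟨-, hr⟩ := dotProduct_inv_mulVec_mem_Icc (by linarith) hM hMb hx
  have hr1 : x ⬝ᵥ M⁻¹ *ᵥ x < 1 := hr.trans_lt (inv_lt_one_of_one_lt₀ hb)
  have hxx : (a • vecMulVec x x).PosSemidef :=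
    (posSemidef_vecMulVec_self_star x).smul (ha ▸ by bound)
  refine ⟨hM.add_posSemidef hxx, ?_, ?_⟩
  · rw [add_sub_right_comm]
    exact hMb.add hxx
  · rw [det_add_smul_vecMulVec (isUnit_iff_ne_zero.2 hM.det_pos.ne'), ha]
    field_simp [(sub_pos.2 hr1).ne']
    ring

theorem posDef_det_of_rec {T : ℕ} {b : ℝ} (hb : 1 < b) {x : ℕ → n → ℝ}
    (hx : ∀ t ∈ Icc 1 T, x t ⬝ᵥ x t ≤ 1) {a : ℕ → ℝ} {A : ℕ → Matrix n n ℝ} (hA0 : A 0 = b • 1)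
    (ha : ∀ t ∈ Icc 1 T, a t = 1 / (1 - x t ⬝ᵥ ((A (t - 1))⁻¹ *ᵥ x t)))
    (hArec : ∀ t ∈ Icc 1 T, A t = A (t - 1) + a t • vecMulVec (x t) (x t)) :
    ∀ t ≤ T, (A t).PosDef ∧ (A t - b • 1).PosSemidef ∧
      (A t).det = b ^ Fintype.card n * ∏ s ∈ Icc 1 t, a s := by
  intro t ht
  induction t with
  | zero =>
    rw [hA0]
    simp [PosDef.one.smul (by linarith : 0 < b), PosSemidef.zero]
  | succ t ih =>
    have hmem : t + 1 ∈ Icc 1 T := mem_Icc.2 ⟨by omega, ht⟩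
    obtain ⟨hPD, hPSD, hdet⟩ := ih (by omega)
    have h := posDef_det_add_smul_vecMulVec hb hPD hPSD (hx _ hmem) (ha _ hmem)
    rw [hArec _ hmem, prod_Icc_succ_top (by omega), ← mul_assoc, ← hdet]
    exact h

end Matrix

theorem one_le_and_sub_one_le_log_add_const {b c r q : ℝ} (hb : 1 < b) (hc : 0 < c)
    (hbc : 1 / b + 1 / c < 1) (hr0 : 0 ≤ r) (hr : r ≤ b⁻¹) (hq0 : 0 ≤ q) (hq : q ≤ 1) :
    1 ≤ 1 / (1 - r - c⁻¹ * q) ∧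
      1 / (1 - r - c⁻¹ * q) - 1 ≤
        b / (b - 1) * Real.log (1 / (1 - r)) + 1 / (c * (1 - b⁻¹) ^ 2 - (1 - b⁻¹)) := by
  rw [one_div b, one_div c] at hbc
  have hcq0 : 0 ≤ c⁻¹ * q := by positivity
  have hcq : c⁻¹ * q ≤ c⁻¹ := mul_le_of_le_one_right (by positivity) hq
  have hb' : 0 < 1 - b⁻¹ := by linarith
  refine ⟨one_le_one_div (by linarith) (by linarith), ?_⟩
  have hlog : 1 / (1 - r) - 1 ≤ b / (b - 1) * Real.log (1 / (1 - r)) := by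
    refine sub_one_le_mul_log (one_le_one_div (by linarith) (by linarith)) ?_
    calc 1 / (1 - r) ≤ 1 / (1 - b⁻¹) := by gcongr
      _ = b / (b - 1) := by field_simp
  have hgap := one_div_one_sub_sub_le hr hcq0 hcq hbc
  have hK : c⁻¹ / ((1 - b⁻¹ - c⁻¹) * (1 - b⁻¹)) = 1 / (c * (1 - b⁻¹) ^ 2 - (1 - b⁻¹)) := by
    have hfac : c * (1 - b⁻¹) ^ 2 - (1 - b⁻¹) = c * ((1 - b⁻¹ - c⁻¹) * (1 - b⁻¹)) := by
      field_simp
    rw [hfac]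
    field_simp
  linarith

theorem sum_mul_le_sum_add {ι : Type*} {s : Finset ι} {w ρ f : ι → ℝ} {K S : ℝ}
    (hw : ∀ i ∈ s, 1 ≤ w i) (hwf : ∀ i ∈ s, w i - 1 ≤ f i + K) (hρ : ∀ i ∈ s, ρ i ≤ S)
    (hS : 0 ≤ S) :
    ∑ i ∈ s, w i * ρ i ≤ ∑ i ∈ s, ρ i + S * ∑ i ∈ s, f i + #s * S * K := by
  calc ∑ i ∈ s, w i * ρ i = ∑ i ∈ s, ρ i + ∑ i ∈ s, (w i - 1) * ρ i := by
        rw [← sum_add_distrib]; exact sum_congr rfl fun i _ => by ring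
    _ ≤ ∑ i ∈ s, ρ i + ∑ i ∈ s, (f i + K) * S := by
        refine (add_le_add_iff_left _).2 (sum_le_sum fun i hi => ?_)
        calc (w i - 1) * ρ i ≤ (w i - 1) * S := by gcongr; linarith [hw i hi]; exact hρ i hi
          _ ≤ (f i + K) * S := by gcongr; exact hwf i hi
    _ = ∑ i ∈ s, ρ i + S * ∑ i ∈ s, f i + #s * S * K := by
        rw [← sum_mul, sum_add_distrib, sum_const, nsmul_eq_mul]
        ring

/-- for every `T`-tuple `(u_1,…,u_T)`,
`L_T^ã(u_1,…,u_T) ≤ L_T(u_1,…,u_T) + (b/(b−1))·S·ln det((1/b)·A_T)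
  + T·S/(c(1 − b⁻¹)² − (1 − b⁻¹))` with `S = sup_{1≤t≤T} (y_t − u_tᵀx_t)²`. -/
theorem stmt_17 {d T : ℕ} (b c : ℝ) (hb : 1 < b) (hc : 0 < c)
    (hbc : 1 / b + 1 / c < 1)
    (x : ℕ → (Fin d → ℝ)) (hx : ∀ t ∈ Icc 1 T, x t ⬝ᵥ x t ≤ 1)
    (y : ℕ → ℝ)
    (a atil : ℕ → ℝ) (A : ℕ → Matrix (Fin d) (Fin d) ℝ)
    (hA0 : A 0 = b • (1 : Matrix (Fin d) (Fin d) ℝ))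
    (ha : ∀ t ∈ Icc 1 T, a t = 1 / (1 - x t ⬝ᵥ ((A (t - 1))⁻¹ *ᵥ x t)))
    (hArec : ∀ t ∈ Icc 1 T, A t = A (t - 1) + a t • vecMulVec (x t) (x t))
    (hatil : ∀ t ∈ Icc 1 T,
      atil t = 1 / (1 - x t ⬝ᵥ ((A (t - 1))⁻¹ *ᵥ x t) - c⁻¹ * (x t ⬝ᵥ x t))) :
    ∀ (u : ℕ → Fin d → ℝ) (S : ℝ),
      S = sSup ((fun t => (y t - u t ⬝ᵥ x t) ^ 2) '' Set.Icc 1 T) →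
      ∑ t ∈ Icc 1 T, atil t * (y t - u t ⬝ᵥ x t) ^ 2
        ≤ (∑ t ∈ Icc 1 T, (y t - u t ⬝ᵥ x t) ^ 2)
          + b / (b - 1) * S * Real.log (((1 / b) • A T).det)
          + (T : ℝ) * S / (c * (1 - b⁻¹) ^ 2 - (1 - b⁻¹)) := by
  intro u S hS
  have hb0 : 0 < b := by linarith
  have hrec := posDef_det_of_rec hb hx hA0 ha hArec
  have hr (t : ℕ) (ht : t ∈ Icc 1 T) : x t ⬝ᵥ ((A (t - 1))⁻¹ *ᵥ x t) ∈ Set.Icc 0 b⁻¹ := by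
    obtain ⟨hPD, hPSD, -⟩ := hrec (t - 1) (by grind)
    exact dotProduct_inv_mulVec_mem_Icc hb0 hPD hPSD (hx t ht)
  have ha0 (t : ℕ) (ht : t ∈ Icc 1 T) : 0 < a t := by
    rw [ha t ht]
    have hr1 := (hr t ht).2.trans_lt (inv_lt_one_of_one_lt₀ hb)
    exact one_div_pos.2 (by linarith)
  have hlogdet : Real.log ((1 / b) • A T).det = ∑ t ∈ Icc 1 T, Real.log (a t) := by
    rw [det_smul, (hrec T le_rfl).2.2, ← mul_assoc, ← mul_pow, one_div_mul_cancel hb0.ne',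
      one_pow, one_mul, Real.log_prod fun t ht => (ha0 t ht).ne']
  have hw (t : ℕ) (ht : t ∈ Icc 1 T) : 1 ≤ atil t ∧
      atil t - 1 ≤ b / (b - 1) * Real.log (a t) + 1 / (c * (1 - b⁻¹) ^ 2 - (1 - b⁻¹)) := by
    rw [hatil t ht, ha t ht]
    exact one_le_and_sub_one_le_log_add_const hb hc hbc (hr t ht).1 (hr t ht).2
      (dotProduct_self_star_nonneg _) (hx t ht)
  have hρS (t : ℕ) (ht : t ∈ Icc 1 T) : (y t - u t ⬝ᵥ x t) ^ 2 ≤ S :=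
    hS ▸ le_csSup ((Set.finite_Icc 1 T).image _).bddAbove ⟨t, by simpa using ht, rfl⟩
  have hS0 : 0 ≤ S := hS ▸ Real.sSup_nonneg (by rintro _ ⟨t, -, rfl⟩; positivity)
  calc _ ≤ _ := sum_mul_le_sum_add (fun t ht => (hw t ht).1) (fun t ht => (hw t ht).2) hρS hS0
    _ = _ := by
      rw [← mul_sum, ← hlogdet, Nat.card_Icc, add_tsub_cancel_right]
      ring
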